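/- arXiv:2404.07571 — 2 statements merged into one kernel-verified Lean document; each statement's English description precedes it below -/
import Mathlib

section
/- Let L be the Laplacian of a connected undirected graph on N vertices, a_i ∈ R^{d_i}, b_i ∈ R, and A = blkdiag(a_1,...,a_N) (so (A^T x)_i = a_i^T x_i for x = (x_1,...,x_N)). Then x satisfies Σ_i (a_i^T x_i + b_i) ≤ 0 if and only if there exists y ∈ R^N with A^T x + L y + b ≤ 0 componentwise (b = (b_1,...,b_N)). -/
/-!
Summing the decomposed constraints makes the Laplacian term vanish, because `1ᵀ L = (L 1)ᵀ = 0`.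
Conversely, for a connected graph the kernel of `L` is one-dimensional, so its range has
dimension `N - 1` and is exactly the hyperplane of zero-sum vectors. Hence `L y` can be any
zero-sum correction, in particular the one replacing every `a_iᵀ x_i + b_i` by their mean.
-/

open Matrix

theorem Fintype.sum_nonpos_iff_exists_sum_eq_zero_add_nonpos {V 𝕜 : Type*} [Fintype V] [Field 𝕜]
    [LinearOrder 𝕜] [IsStrictOrderedRing 𝕜] (c : V → 𝕜) :
    ∑ i, c i ≤ 0 ↔ ∃ t : V → 𝕜, ∑ i, t i = 0 ∧ ∀ i, c i + t i ≤ 0 := by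
  constructor
  · intro hc
    rcases isEmpty_or_nonempty V with _ | _
    · exact ⟨0, by simp, isEmptyElim⟩
    set mean := (∑ i, c i) / Fintype.card V
    refine ⟨fun i => mean - c i, ?_, fun i => ?_⟩
    · simp only [Finset.sum_sub_distrib, Finset.sum_const, Finset.card_univ, nsmul_eq_mul, mean]
      field_simp
      ring
    · simpa using div_nonpos_of_nonpos_of_nonneg hc (Nat.cast_nonneg _)
  · rintro ⟨t, ht, hct⟩
    calc ∑ i, c i = ∑ i, (c i + t i) := by rw [Finset.sum_add_distrib, ht, add_zero]
      _ ≤ 0 := Finset.sum_nonpos fun i _ => hct i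

namespace SimpleGraph

variable {V : Type*} [Fintype V] [DecidableEq V] (G : SimpleGraph V) [DecidableRel G.Adj]

theorem sum_lapMatrix_mulVec {R : Type*} [CommRing R] (y : V → R) :
    ∑ i, (G.lapMatrix R *ᵥ y) i = 0 := by
  have hconst : G.lapMatrix R *ᵥ 1 = 0 := G.lapMatrix_mulVec_const_eq_zero
  rw [← one_dotProduct, dotProduct_mulVec, ← (G.isSymm_lapMatrix (R := R)).eq, vecMul_transpose,
    hconst, zero_dotProduct]

theorem range_toLin'_lapMatrix (hG : G.Connected) :
    LinearMap.range (G.lapMatrix ℝ).toLin' = LinearMap.ker (dotProductBilin ℝ ℝ (1 : V → ℝ)) := by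
  have hV : Nonempty V := hG.nonempty
  have hle : LinearMap.range (G.lapMatrix ℝ).toLin' ≤ LinearMap.ker (dotProductBilin ℝ ℝ 1) := by
    rintro _ ⟨y, rfl⟩
    simp [one_dotProduct, sum_lapMatrix_mulVec]
  have hker : Module.finrank ℝ (LinearMap.ker (G.lapMatrix ℝ).toLin') = 1 := by
    rw [← card_connectedComponent_eq_finrank_ker_toLin'_lapMatrix, Fintype.card_eq_one_iff]
    exact ⟨G.connectedComponentMk hV.some,
      fun _ => hG.preconnected.subsingleton_connectedComponent.elim _ _⟩
  have hne : LinearMap.ker (dotProductBilin ℝ ℝ (1 : V → ℝ)) ≠ ⊤ := by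
    intro h
    have := h ▸ Submodule.mem_top (x := (1 : V → ℝ))
    simp [one_dotProduct_one] at this
  refine Submodule.eq_of_le_of_finrank_le hle ?_
  have hrank := LinearMap.finrank_range_add_finrank_ker (G.lapMatrix ℝ).toLin'
  have hlt := Submodule.finrank_lt hne
  simp only [Module.finrank_pi] at hrank hlt
  omega

theorem exists_lapMatrix_mulVec_eq_iff (hG : G.Connected) (t : V → ℝ) :
    (∃ y, G.lapMatrix ℝ *ᵥ y = t) ↔ ∑ i, t i = 0 := by
  simpa [one_dotProduct] using SetLike.ext_iff.mp (G.range_toLin'_lapMatrix hG) t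

end SimpleGraph

/-- A single coupling constraint `Σ_i (a_iᵀ x_i + b_i) ≤ 0` holds iff there is an
auxiliary vector `y` such that the decomposed constraints
`a_iᵀ x_i + (L y)_i + b_i ≤ 0` hold for every agent `i`. -/
theorem coupling_constraint_iff_decomposed (N : ℕ) (G : SimpleGraph (Fin N))
    [DecidableRel G.Adj] (hG : G.Connected) (d : Fin N → ℕ)
    (a : (i : Fin N) → Fin (d i) → ℝ) (b : Fin N → ℝ)
    (x : (i : Fin N) → Fin (d i) → ℝ) :
    (∑ i, (a i ⬝ᵥ x i + b i)) ≤ 0 ↔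
      ∃ y : Fin N → ℝ, ∀ i, a i ⬝ᵥ x i + ((G.lapMatrix ℝ) *ᵥ y) i + b i ≤ 0 := by
  rw [Fintype.sum_nonpos_iff_exists_sum_eq_zero_add_nonpos]
  constructor
  · rintro ⟨t, ht, hct⟩
    obtain ⟨y, rfl⟩ := (G.exists_lapMatrix_mulVec_eq_iff hG t).mpr ht
    exact ⟨y, fun i => by linarith [hct i]⟩
  · rintro ⟨y, hy⟩
    exact ⟨_, G.sum_lapMatrix_mulVec y, fun i => by linarith [hy i]⟩
end

section
/- Let c ∈ R^M solve the fixed-point equation Λ c = max(A^T x_nom + b' + (Λ − A^T A) c, 0) componentwise, where Λ = diag(A^T A). Then x = x_nom − A c together with c satisfies the KKT conditions of the QP minimize (1/2)‖x − x_nom‖² subject to A^T x + b' ≤ 0, provided the diagonal entries of Λ are positive. -/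
open Matrix

/-- If `c` solves the fixed-point equation
`Λ c = max(Aᵀ x_nom + b' + (Λ − Aᵀ A) c, 0)` with `Λ = diag(Aᵀ A)` having
positive diagonal, then `x = x_nom − A c` together with `c` satisfies the KKT
conditions of the QP `min (1/2)‖x − x_nom‖²  s.t.  Aᵀ x + b' ≤ 0`. -/
theorem fixed_point_gives_kkt {d M : ℕ} (A : Matrix (Fin d) (Fin M) ℝ)
    (xnom : Fin d → ℝ) (b' : Fin M → ℝ) (c : Fin M → ℝ)
    (hΛ : ∀ m, 0 < (Aᵀ * A) m m)
    (hc : ∀ m, (Aᵀ * A) m m * c m =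
      max ((Aᵀ *ᵥ xnom + b') m + ((Aᵀ * A) m m * c m - ((Aᵀ * A) *ᵥ c) m)) 0) :
    (xnom - A *ᵥ c) - xnom + A *ᵥ c = 0 ∧
    0 ≤ c ∧
    Aᵀ *ᵥ (xnom - A *ᵥ c) + b' ≤ 0 ∧
    ∀ m, c m * (Aᵀ *ᵥ (xnom - A *ᵥ c) + b') m = 0 := by
  have key : ∀ m, 0 ≤ c m ∧ (Aᵀ *ᵥ (xnom - A *ᵥ c) + b') m ≤ 0 ∧
      c m * (Aᵀ *ᵥ (xnom - A *ᵥ c) + b') m = 0 := by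
    intro m
    have hs : (Aᵀ *ᵥ (xnom - A *ᵥ c) + b') m
        = (Aᵀ *ᵥ xnom + b') m - ((Aᵀ * A) *ᵥ c) m := by
      simp [Matrix.mulVec_sub, Matrix.mulVec_mulVec]
      ring
    have h := hc m
    have hpos := hΛ m
    set s : ℝ := (Aᵀ *ᵥ xnom + b') m - ((Aᵀ * A) *ᵥ c) m with hsdef
    have harg : (Aᵀ *ᵥ xnom + b') m + ((Aᵀ * A) m m * c m - ((Aᵀ * A) *ᵥ c) m)
        = s + (Aᵀ * A) m m * c m := by rw [hsdef]; ring
    rw [harg] at h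
    rcases le_or_gt (s + (Aᵀ * A) m m * c m) 0 with h1 | h1
    · have h0 : (Aᵀ * A) m m * c m = 0 := by rw [h, max_eq_right h1]
      have hc0 : c m = 0 := by
        have := mul_eq_zero.mp h0
        rcases this with h' | h'
        · exact absurd h' (ne_of_gt hpos)
        · exact h'
      have hsle : s ≤ 0 := by rw [hc0] at h1; linarith
      refine ⟨le_of_eq hc0.symm, by rw [hs]; exact hsle, by rw [hc0]; ring⟩
    · have h0 : (Aᵀ * A) m m * c m = s + (Aᵀ * A) m m * c m := by
        rw [max_eq_left (le_of_lt h1)] at h; exact h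
      have hs0 : s = 0 := by linarith
      have hcge : 0 ≤ c m := by
        rw [hs0, zero_add] at h1
        exact nonneg_of_mul_nonneg_right (le_of_lt h1) hpos
      refine ⟨hcge, by rw [hs, hs0], by rw [hs, hs0]; ring⟩
  refine ⟨by abel, fun m => (key m).1, fun m => (key m).2.1, fun m => (key m).2.2⟩
end
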